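/- arXiv:2105.00223 — 3 statements merged into one kernel-verified Lean document; each statement's English description precedes it below -/
import Mathlib

section
/- Let (Ỹ_u)_{u>0} be a locally stationary approximation of the sequence (Y_N)_{N∈ℕ} for some p ≥ 1. Then for every t > 0, (1/t)∫_0^t Y_N(ν) dν converges in L^p, as N → ∞, to the constant (1/t)∫_0^t E[Ỹ_u(0)] du. -/
open MeasureTheory Filter ENNReal
open scoped NNReal Topology BigOperators

noncomputable section

variable {Ω : Type*} [MeasurableSpace Ω]

/-- An ergodic measure-preserving flow `(T_t)_{t ∈ ℝ}` on a probability space. -/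
structure IsErgodicFlow (μ : Measure Ω) (T : ℝ → Ω → Ω) : Prop where
  measurable : ∀ t, Measurable (T t)
  measurePreserving : ∀ t, MeasurePreserving (T t) μ μ
  flow : ∀ s t ω, T s (T t ω) = T (s + t) ω
  id_zero : ∀ ω, T 0 ω = ω
  ergodic : ∀ A : Set Ω, MeasurableSet A → (∀ t, T t ⁻¹' A = A) → μ A = 0 ∨ μ A = 1

/-- A real-valued continuous-time process is stationary and ergodic:
`X(t, ω) = X(0, T_t ω)` for an ergodic measure-preserving flow `T`. -/
def IsStatErgodic (μ : Measure Ω) (X : ℝ → Ω → ℝ) : Prop :=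
  (∀ t, Measurable (X t)) ∧
    ∃ T : ℝ → Ω → Ω, IsErgodicFlow μ T ∧ ∀ t ω, X t ω = X 0 (T t ω)

/-- Stationarity of a continuous-time real-valued process: all finite-dimensional
distributions are invariant under time shifts. -/
def IsStationaryProc (μ : Measure Ω) (X : ℝ → Ω → ℝ) : Prop :=
  (∀ t, Measurable (X t)) ∧
    ∀ (s : ℝ) (n : ℕ) (t : Fin n → ℝ),
      μ.map (fun ω (i : Fin n) => X (t i) ω) = μ.map (fun ω (i : Fin n) => X (t i + s) ω)

/-- Stationarity of a `ℤ`-indexed real-valued sequence. -/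
def IsStationaryZ (μ : Measure Ω) (X : ℤ → Ω → ℝ) : Prop :=
  (∀ k, Measurable (X k)) ∧
    ∀ (s : ℤ) (n : ℕ) (t : Fin n → ℤ),
      μ.map (fun ω (i : Fin n) => X (t i) ω) = μ.map (fun ω (i : Fin n) => X (t i + s) ω)

/-- `Ỹ` is a locally stationary approximation of the sequence `Y` for `p ≥ 1`
(Definition 2.1 of the paper). -/
structure IsLSA (μ : Measure Ω) (Y : ℕ → ℝ → Ω → ℝ) (Ytil : ℝ → ℝ → Ω → ℝ)
    (p : ℝ) : Prop where
  one_le : 1 ≤ p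
  measY : ∀ N : ℕ, Measurable (Function.uncurry (Y N))
  measYtil : ∀ u : ℝ, Measurable (Function.uncurry (Ytil u))
  statErg : ∀ u : ℝ, 0 < u → IsStatErgodic μ (Ytil u)
  bddLp : ∃ B : ℝ≥0∞, B < ⊤ ∧ ∀ u : ℝ, 0 < u →
      eLpNorm (Ytil u 0) (ENNReal.ofReal p) μ ≤ B
  approx : ∃ C : ℝ, 0 < C ∧
    (∀ (u v t : ℝ), 0 < u → 0 < v →
      eLpNorm (fun ω => Ytil u t ω - Ytil v t ω) (ENNReal.ofReal p) μ ≤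
        ENNReal.ofReal (C * |u - v|)) ∧
    (∀ (N : ℕ) (t : ℝ), 1 ≤ N → 0 < t →
      eLpNorm (fun ω => Y N t ω - Ytil t ((N : ℝ) * t) ω) (ENNReal.ofReal p) μ ≤
        ENNReal.ofReal (C / (N : ℝ)))

/-- `θ` is a family of upper bounds for the θ-dependence coefficients of the
`E`-valued process `X`, for gaps `h` in the set `S`:  for all bounded measurable
`F`, bounded Lipschitz `G` and times `i₁ ≤ … ≤ i_v ≤ i_v + h ≤ j`,
`|Cov(F(X(i₁),…,X(i_v)), G(X(j)))| ≤ θ(h) ‖F‖_∞ Lip(G)`. -/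
def ThetaBoundOn {E : Type*} [NormedAddCommGroup E] [MeasurableSpace E]
    (μ : Measure Ω) (X : ℝ → Ω → E) (θ : ℝ → ℝ) (S : Set ℝ) : Prop :=
  ∀ (v : ℕ), 0 < v → ∀ (F : (Fin v → E) → ℝ) (G : E → ℝ) (CF : ℝ) (LG : ℝ≥0),
    Measurable F → (∀ x, |F x| ≤ CF) →
    Measurable G → LipschitzWith LG G → (∃ c, ∀ x, |G x| ≤ c) →
    ∀ (τ : Fin v → ℝ) (j h : ℝ), h ∈ S → Monotone τ → (∀ i, τ i + h ≤ j) →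
      |(∫ ω, F (fun i => X (τ i) ω) * G (X j ω) ∂μ) -
          (∫ ω, F (fun i => X (τ i) ω) ∂μ) * (∫ ω, G (X j ω) ∂μ)| ≤ θ h * CF * LG

/-- `θ` bounds the θ-dependence coefficients of `X` for all gaps `h ≥ 0`. -/
def ThetaBound {E : Type*} [NormedAddCommGroup E] [MeasurableSpace E]
    (μ : Measure Ω) (X : ℝ → Ω → E) (θ : ℝ → ℝ) : Prop :=
  ThetaBoundOn μ X θ (Set.Ici 0)

/-- The process `X` is θ-weakly dependent: its θ-coefficients tend to `0`. -/
def ThetaWeaklyDependent {E : Type*} [NormedAddCommGroup E] [MeasurableSpace E]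
    (μ : Measure Ω) (X : ℝ → Ω → E) : Prop :=
  ∃ θ : ℝ → ℝ, ThetaBound μ X θ ∧ Tendsto θ atTop (𝓝 0)

/-- θ-dependence coefficient bounds for a `ℤ`-indexed real-valued sequence. -/
def ThetaBoundZ (μ : Measure Ω) (X : ℤ → Ω → ℝ) (θ : ℕ → ℝ) : Prop :=
  ∀ (v : ℕ), 0 < v → ∀ (F : (Fin v → ℝ) → ℝ) (G : ℝ → ℝ) (CF : ℝ) (LG : ℝ≥0),
    Measurable F → (∀ x, |F x| ≤ CF) →
    Measurable G → LipschitzWith LG G → (∃ c, ∀ x, |G x| ≤ c) →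
    ∀ (τ : Fin v → ℤ) (j : ℤ) (h : ℕ), Monotone τ → (∀ i, τ i + (h : ℤ) ≤ j) →
      |(∫ ω, F (fun i => X (τ i) ω) * G (X j ω) ∂μ) -
          (∫ ω, F (fun i => X (τ i) ω) ∂μ) * (∫ ω, G (X j ω) ∂μ)| ≤ θ h * CF * LG

/-- A localizing kernel: bounded, of bounded variation, compact support `[-1,1]`
and total integral one. -/
structure IsLocalizingKernel (K : ℝ → ℝ) : Prop where
  bdd : ∃ B : ℝ, ∀ x, |K x| ≤ B
  bv : BoundedVariationOn K Set.univ
  supp : ∀ x : ℝ, x ∉ Set.Icc (-1 : ℝ) 1 → K x = 0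
  integral_one : ∫ x : ℝ, K x = 1

/-- The rectangular kernel `K_rect = (1/2)·1_{[-1,1]}`. -/
def Krect : ℝ → ℝ := fun x => if x ∈ Set.Icc (-1 : ℝ) 1 then 1 / 2 else 0

/-- The observation scheme of Assumption 2.2: grid sizes `δ_N ↓ 0`, bandwidths
`b_N ↓ 0` and `b_N / δ_N → ∞`. -/
structure ObsScheme (δ b : ℕ → ℝ) : Prop where
  δpos : ∀ N, 0 < δ N
  δanti : Antitone δ
  δto0 : Tendsto δ atTop (𝓝 0)
  bpos : ∀ N, 0 < b N
  banti : Antitone b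
  bto0 : Tendsto b atTop (𝓝 0)
  ratio_top : Tendsto (fun N => b N / δ N) atTop atTop

/-- The class `𝓛_{k+1}(M, C)` of finite-memory transformations. -/
def MemL (k : ℕ) (M C : ℝ) (g : (Fin (k + 1) → ℝ) → ℝ) : Prop :=
  Measurable g ∧ ∀ x y : Fin (k + 1) → ℝ,
    |g x - g y| ≤ C * (∑ i, |x i - y i|) *
      (1 + (∑ i, |x i|) ^ M + (∑ i, |y i|) ^ M)

/-- The class `𝓛_∞^{p,q}(α)` of infinite-memory transformations. -/
def MemLinf (μ : Measure Ω) (p q : ℝ) (α : ℕ → ℝ) (g : (ℕ → ℝ) → ℝ) : Prop :=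
  Measurable g ∧ (∀ k, 0 ≤ α k) ∧ Summable α ∧
    ∃ f : ℝ≥0∞ → ℝ≥0∞,
      ∀ X Y : ℕ → Ω → ℝ,
        (∀ k, Measurable (X k)) → (∀ k, Measurable (Y k)) →
        (⨆ k, max (eLpNorm (X k) (ENNReal.ofReal q) μ)
            (eLpNorm (Y k) (ENNReal.ofReal q) μ)) < ⊤ →
        eLpNorm (fun ω => g (fun k => X k ω) - g (fun k => Y k ω))
            (ENNReal.ofReal p) μ ≤
          f (⨆ k, max (eLpNorm (X k) (ENNReal.ofReal q) μ)
              (eLpNorm (Y k) (ENNReal.ofReal q) μ)) *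
            ∑' k : ℕ, ENNReal.ofReal (α k) *
              eLpNorm (fun ω => X k ω - Y k ω) (ENNReal.ofReal q) μ

end

/-!
On a block `(a, b]` of an equal partition of `[0, t]`, `Y_N(ν)` is within `C / N + C (b - a)` of
`Ỹ_b(N ν)` in `Lᵖ`, and `u ↦ E Ỹ_u(0)` is `C`-Lipschitz. The block average of `ν ↦ Ỹ_b(N ν)` is
a time average of the stationary ergodic process `Ỹ_b` over a window of length `N (b - a)`, so it
converges in `Lᵖ` to `E Ỹ_b(0)` by the continuous-time `Lᵖ` ergodic theorem. Averaging over `K`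
blocks, the `Lᵖ` error is eventually at most `2 C t / K` plus an arbitrarily small term.

The ergodic theorem is proved first for bounded processes, from von Neumann's mean ergodic theorem
for the time-one map: a subsequence of the time averages converges a.e., and its `limsup` is
invariant under the whole flow, hence constant. Truncation then extends it to `Lᵖ`.
-/

open Set
open scoped Interval

section IntervalAverage

variable {f : ℝ → ℝ} {M t : ℝ}

theorem intervalIntegrable_of_abs_le (hf : Measurable f) (hM : ∀ r, |f r| ≤ M) (a b : ℝ) :
    IntervalIntegrable f volume a b :=
  (intervalIntegrable_const (c := M)).mono_fun hf.aestronglyMeasurable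
    (Eventually.of_forall fun r => by simpa using (hM r).trans (le_abs_self M))

theorem abs_intervalIntegral_le_of_abs_le {a b : ℝ} (hM : ∀ r ∈ Ι a b, |f r| ≤ M) :
    |∫ r in a..b, f r| ≤ M * |b - a| := by
  simpa only [Real.norm_eq_abs] using
    intervalIntegral.norm_integral_le_of_norm_le_const (a := a) (b := b) (f := f) (C := M)
      fun r hr => by simpa only [Real.norm_eq_abs] using hM r hr

theorem abs_intervalAverage_le {a b : ℝ} (hM : ∀ r ∈ Ι a b, |f r| ≤ M) (hM0 : 0 ≤ M) :
    |⨍ r in a..b, f r| ≤ M := by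
  rcases eq_or_ne a b with rfl | hab
  · simpa using hM0
  rw [interval_average_eq, smul_eq_mul, abs_mul, abs_inv, ← le_div_iff₀' (by
    simpa [sub_eq_zero] using hab.symm), div_inv_eq_mul]
  exact abs_intervalIntegral_le_of_abs_le hM

theorem abs_intervalAverage_add_sub_le (hf : Measurable f) (hM : ∀ r, |f r| ≤ M) {s : ℝ}
    (hs : 0 ≤ s) (h : ℝ) :
    |(⨍ r in 0..s, f (r + h)) - ⨍ r in 0..s, f r| ≤ 2 * M * |h| / s := by
  have hi := intervalIntegrable_of_abs_le hf hM
  rw [interval_average_eq, interval_average_eq, intervalIntegral.integral_comp_add_right,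
    smul_eq_mul, smul_eq_mul, ← mul_sub, zero_add, sub_zero,
    intervalIntegral.integral_interval_sub_interval_comm' (hi _ _) (hi _ _) (hi _ _), abs_mul,
    abs_of_nonneg (inv_nonneg.2 hs), inv_mul_eq_div]
  gcongr
  calc |(∫ r in s..s + h, f r) - ∫ r in 0..h, f r| ≤ M * |s + h - s| + M * |h - 0| :=
        (abs_sub _ _).trans (add_le_add (abs_intervalIntegral_le_of_abs_le fun r _ => hM r)
          (abs_intervalIntegral_le_of_abs_le fun r _ => hM r))
    _ = 2 * M * |h| := by ring_nf

theorem abs_intervalAverage_sub_intervalAverage_le (hf : Measurable f) (hM : ∀ r, |f r| ≤ M)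
    {a b : ℝ} (ha : 0 < a) (hab : a ≤ b) :
    |(⨍ r in 0..b, f r) - ⨍ r in 0..a, f r| ≤ 2 * M * (b - a) / b := by
  have hb : 0 < b := ha.trans_le hab
  have hi := intervalIntegrable_of_abs_le hf hM
  have hpiece : ∀ c d, c ≤ d → |∫ r in c..d, f r| ≤ M * (d - c) := fun c d hcd => by
    simpa [abs_of_nonneg (sub_nonneg.2 hcd)] using
      abs_intervalIntegral_le_of_abs_le (a := c) (b := d) fun r _ => hM r
  have hsplit : (⨍ r in 0..b, f r) - ⨍ r in 0..a, f r =
      b⁻¹ * (∫ r in a..b, f r) - (a⁻¹ - b⁻¹) * ∫ r in 0..a, f r := by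
    rw [interval_average_eq, interval_average_eq, smul_eq_mul, smul_eq_mul, sub_zero, sub_zero,
      ← intervalIntegral.integral_add_adjacent_intervals (hi 0 a) (hi a b)]
    ring
  have hinv : 0 ≤ a⁻¹ - b⁻¹ := sub_nonneg.2 (inv_anti₀ ha hab)
  rw [hsplit]
  calc _ ≤ |b⁻¹ * ∫ r in a..b, f r| + |(a⁻¹ - b⁻¹) * ∫ r in 0..a, f r| := abs_sub _ _
    _ ≤ b⁻¹ * (M * (b - a)) + (a⁻¹ - b⁻¹) * (M * (a - 0)) := by
        rw [abs_mul, abs_mul, abs_of_nonneg (inv_nonneg.2 hb.le), abs_of_nonneg hinv]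
        gcongr
        exacts [hpiece a b hab, hpiece 0 a ha.le]
    _ = 2 * M * (b - a) / b := by field_simp; ring

theorem intervalAverage_eq_inv_mul_sum (hf : IntervalIntegrable f volume 0 t) (ht : 0 < t)
    {K : ℕ} (hK : 0 < K) :
    ⨍ ν in 0..t, f ν =
      (K : ℝ)⁻¹ * ∑ i ∈ Finset.range K, ⨍ ν in i * (t / K)..(i + 1 : ℕ) * (t / K), f ν := by
  have hK' : (0 : ℝ) < K := by exact_mod_cast hK
  have hΔ : 0 < t / K := by positivity
  have hblocks : ∀ i ∈ Finset.range K,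
      IntervalIntegrable f volume (i * (t / K)) ((i + 1 : ℕ) * (t / K)) := fun i hi => by
    have hiK : ((i + 1 : ℕ) : ℝ) ≤ K := by exact_mod_cast Finset.mem_range.1 hi
    refine hf.mono_set ?_
    rw [uIcc_of_le ht.le, uIcc_of_le (by gcongr; simp)]
    refine Icc_subset_Icc (by positivity) ((mul_le_mul_of_nonneg_right hiK hΔ.le).trans ?_)
    field_simp; rfl
  have hsum := intervalIntegral.sum_integral_adjacent_intervals
    (a := fun i : ℕ => i * (t / K)) fun i hi => hblocks i (Finset.mem_range.2 hi)
  simp only [Nat.cast_zero, zero_mul] at hsum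
  rw [show (K : ℝ) * (t / K) = t by field_simp] at hsum
  simp_rw [interval_average_eq, smul_eq_mul, sub_zero, ← hsum, Finset.mul_sum]
  refine Finset.sum_congr rfl fun i _ => ?_
  push_cast
  rw [show (i + 1 : ℝ) * (t / K) - i * (t / K) = t / K by ring]
  field_simp

end IntervalAverage

namespace MeasureTheory

variable {Ω : Type*} [MeasurableSpace Ω] {μ : Measure Ω}

theorem measurable_intervalIntegral_of_uncurry {f : ℝ → Ω → ℝ}
    (hf : Measurable (Function.uncurry f)) (a b : ℝ) :
    Measurable fun ω => ∫ ν in a..b, f ν ω := by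
  have hIoc : ∀ c d : ℝ, Measurable fun ω => ∫ ν in Ioc c d, f ν ω := fun c d =>
    ((hf.comp measurable_swap).stronglyMeasurable.integral_prod_right'
      (ν := volume.restrict (Ioc c d))).measurable
  exact (hIoc a b).sub (hIoc b a)

theorem measurable_intervalAverage_of_uncurry {f : ℝ → Ω → ℝ}
    (hf : Measurable (Function.uncurry f)) (a b : ℝ) :
    Measurable fun ω => ⨍ ν in a..b, f ν ω := by
  simp only [interval_average_eq, smul_eq_mul]
  exact (measurable_intervalIntegral_of_uncurry hf a b).const_mul _

/-- Minkowski's integral inequality, with Jensen's inequality `L¹(ρ) ≤ Lᵖ(ρ)` for the inner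
integral. -/
theorem eLpNorm_integral_le_of_ae_eLpNorm_le {α : Type*} [MeasurableSpace α] {ρ : Measure α}
    [IsProbabilityMeasure ρ] [SFinite μ] {f : α → Ω → ℝ} (hf : Measurable (Function.uncurry f))
    {p : ℝ≥0∞} (hp : 1 ≤ p) (hp' : p ≠ ∞) {ε : ℝ≥0∞}
    (hε : ∀ᵐ x ∂ρ, eLpNorm (f x) p μ ≤ ε) :
    eLpNorm (fun ω => ∫ x, f x ω ∂ρ) p μ ≤ ε := by
  have hp0 : p ≠ 0 := (zero_lt_one.trans_le hp).ne'
  set r := p.toReal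
  have hr : 0 < r := ENNReal.toReal_pos hp0 hp'
  have hjensen : ∀ ω, ‖∫ x, f x ω ∂ρ‖ₑ ^ r ≤ ∫⁻ x, ‖f x ω‖ₑ ^ r ∂ρ := fun ω =>
    calc ‖∫ x, f x ω ∂ρ‖ₑ ^ r ≤ eLpNorm (fun x => f x ω) 1 ρ ^ r := by
          rw [eLpNorm_one_eq_lintegral_enorm]; gcongr; exact enorm_integral_le_lintegral_enorm _
      _ ≤ eLpNorm (fun x => f x ω) p ρ ^ r := by
          gcongr
          exact eLpNorm_le_eLpNorm_of_exponent_le hp hf.of_uncurry_right.aestronglyMeasurable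
      _ = ∫⁻ x, ‖f x ω‖ₑ ^ r ∂ρ := by
          rw [eLpNorm_eq_eLpNorm' hp0 hp', lintegral_rpow_enorm_eq_rpow_eLpNorm' hr]
  have hslice : ∀ᵐ x ∂ρ, ∫⁻ ω, ‖f x ω‖ₑ ^ r ∂μ ≤ ε ^ r := hε.mono fun x hx => by
    rw [lintegral_rpow_enorm_eq_rpow_eLpNorm' hr, ← eLpNorm_eq_eLpNorm' hp0 hp']; gcongr
  rw [eLpNorm_eq_eLpNorm' hp0 hp', eLpNorm'_eq_lintegral_enorm, one_div,
    ENNReal.rpow_inv_le_iff hr]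
  calc ∫⁻ ω, ‖∫ x, f x ω ∂ρ‖ₑ ^ r ∂μ ≤ ∫⁻ ω, ∫⁻ x, ‖f x ω‖ₑ ^ r ∂ρ ∂μ := lintegral_mono hjensen
    _ = ∫⁻ x, ∫⁻ ω, ‖f x ω‖ₑ ^ r ∂μ ∂ρ :=
        lintegral_lintegral_swap ((hf.comp measurable_swap).enorm.pow_const r).aemeasurable
    _ ≤ ∫⁻ _, ε ^ r ∂ρ := lintegral_mono_ae hslice
    _ = ε ^ r := by simp

theorem eLpNorm_intervalAverage_le [SFinite μ] {f : ℝ → Ω → ℝ}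
    (hf : Measurable (Function.uncurry f)) {p : ℝ≥0∞} (hp : 1 ≤ p) (hp' : p ≠ ∞) {a b : ℝ}
    (hab : a < b) {ε : ℝ≥0∞} (hε : ∀ ν ∈ Ioc a b, eLpNorm (f ν) p μ ≤ ε) :
    eLpNorm (fun ω => ⨍ ν in a..b, f ν ω) p μ ≤ ε := by
  rw [uIoc_of_le hab.le]
  have : IsFiniteMeasure (volume.restrict (Ioc a b)) := isFiniteMeasure_restrict.2 (by simp)
  have : NeZero (volume.restrict (Ioc a b)) := ⟨by simp [hab]⟩
  exact eLpNorm_integral_le_of_ae_eLpNorm_le hf hp hp'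
    (Measure.ae_smul_measure (ae_restrict_of_forall_mem measurableSet_Ioc hε) _)

theorem ae_intervalIntegrable_of_eLpNorm_le [IsProbabilityMeasure μ] {f : ℝ → Ω → ℝ}
    (hf : Measurable (Function.uncurry f)) {p : ℝ≥0∞} (hp : 1 ≤ p) {a b : ℝ} {B : ℝ≥0∞}
    (hB : B ≠ ∞) (hbd : ∀ ν ∈ Ι a b, eLpNorm (f ν) p μ ≤ B) :
    ∀ᵐ ω ∂μ, IntervalIntegrable (fun ν => f ν ω) volume a b := by
  have hmeas : Measurable fun q : Ω × ℝ => ‖f q.2 q.1‖ₑ := (hf.comp measurable_swap).enorm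
  have hfin : ∫⁻ ω, (∫⁻ ν in Ι a b, ‖f ν ω‖ₑ) ∂μ ≠ ∞ := by
    rw [lintegral_lintegral_swap hmeas.aemeasurable]
    refine ne_top_of_le_ne_top (b := ∫⁻ _ in Ι a b, B)
      (by simpa using ENNReal.mul_ne_top hB ENNReal.ofReal_ne_top) ?_
    refine setLIntegral_mono measurable_const fun ν hν => ?_
    rw [← eLpNorm_one_eq_lintegral_enorm]
    exact (eLpNorm_le_eLpNorm_of_exponent_le hp hf.of_uncurry_left.aestronglyMeasurable).trans
      (hbd ν hν)
  filter_upwards [ae_lt_top hmeas.lintegral_prod_right hfin] with ω hω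
  exact intervalIntegrable_iff.2 ⟨hf.of_uncurry_right.aestronglyMeasurable, hω⟩

theorem tendsto_eLpNorm_sub_of_tendstoInMeasure_of_abs_le [IsFiniteMeasure μ] {p : ℝ≥0∞}
    (hp : 1 ≤ p) (hp' : p ≠ ∞) {f : ℕ → Ω → ℝ} {g : Ω → ℝ}
    (hf : ∀ n, AEStronglyMeasurable (f n) μ) {M : ℝ} (hM : ∀ n ω, |f n ω| ≤ M)
    (hg : MemLp g p μ) (hfg : TendstoInMeasure μ f atTop g) :
    Tendsto (fun n => eLpNorm (f n - g) p μ) atTop (𝓝 0) := by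
  refine tendsto_Lp_finite_of_tendstoInMeasure hp hp' hf hg
    (unifIntegrable_of hp hp' hf fun ε hε => ⟨M.toNNReal + 1, fun n => ?_⟩) hfg
  have hempty : {ω | M.toNNReal + 1 ≤ ‖f n ω‖₊} = ∅ := by
    ext ω
    simp only [mem_ofPred_eq, mem_empty_iff_false, iff_false, not_le]
    rw [← NNReal.coe_lt_coe, coe_nnnorm, Real.norm_eq_abs]
    push_cast
    linarith [hM n ω, M.le_coe_toNNReal]
  simp [hempty]

theorem MemLp.exists_eLpNorm_sub_truncation_le {p : ℝ≥0∞} {f : Ω → ℝ} (hf : MemLp f p μ)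
    (hfm : Measurable f) {ε : ℝ} (hε : 0 < ε) :
    ∃ M : ℝ, eLpNorm (f - ProbabilityTheory.truncation f M) p μ ≤ ENNReal.ofReal ε := by
  obtain ⟨M, -, hM⟩ := hf.eLpNorm_indicator_norm_ge_pos_le hfm.stronglyMeasurable hε
  refine ⟨M, (eLpNorm_mono fun ω => ?_).trans hM⟩
  by_cases hω : f ω ∈ Ioc (-M) M
  · simp [ProbabilityTheory.truncation, hω]
  · have hMf : M ≤ |f ω| := by
      rcases not_and_or.1 hω with h | h
      exacts [le_abs.2 (.inr (by linarith [not_lt.1 h])), le_abs.2 (.inl (not_le.1 h).le)]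
    simp [ProbabilityTheory.truncation, hω]
    rw [Set.indicator_of_mem (show ω ∈ {x | M ≤ |f x|} from hMf)]

theorem eLpNorm_const_of_isProbabilityMeasure [IsProbabilityMeasure μ] {p : ℝ≥0∞} (hp : p ≠ 0)
    (c : ℝ) : eLpNorm (fun _ : Ω => c) p μ = ‖c‖ₑ := by
  simp [eLpNorm_const c hp (IsProbabilityMeasure.ne_zero μ)]

theorem enorm_integral_le_eLpNorm [IsProbabilityMeasure μ] {p : ℝ≥0∞} (hp : 1 ≤ p) {f : Ω → ℝ}
    (hf : AEStronglyMeasurable f μ) : ‖∫ ω, f ω ∂μ‖ₑ ≤ eLpNorm f p μ :=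
  (enorm_integral_le_lintegral_enorm f).trans
    ((eLpNorm_one_eq_lintegral_enorm (f := f)).symm.le.trans
      (eLpNorm_le_eLpNorm_of_exponent_le hp hf))

theorem integral_eq_of_tendsto_eLpNorm [IsProbabilityMeasure μ] {p : ℝ≥0∞} (hp : 1 ≤ p)
    {f : ℕ → Ω → ℝ} {g : Ω → ℝ} (hf : ∀ n, Integrable (f n) μ) (hg : AEStronglyMeasurable g μ)
    (hfg : Tendsto (fun n => eLpNorm (f n - g) p μ) atTop (𝓝 0)) {m : ℝ}
    (hm : ∀ᶠ n in atTop, ∫ ω, f n ω ∂μ = m) : ∫ ω, g ω ∂μ = m := by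
  have hL1 : Tendsto (fun n => eLpNorm (f n - g) 1 μ) atTop (𝓝 0) :=
    tendsto_of_tendsto_of_tendsto_of_le_of_le tendsto_const_nhds hfg (fun _ => zero_le) fun n =>
      eLpNorm_le_eLpNorm_of_exponent_le hp ((hf n).aestronglyMeasurable.sub hg)
  exact tendsto_nhds_unique
    ((tendsto_integral_of_L1' g hg (Eventually.of_forall hf) hL1).congr' hm) tendsto_const_nhds

theorem eLpNorm_intervalAverage_sub_le_of_blocks {f : ℝ → Ω → ℝ} {g : ℝ → ℝ}
    (hf : Measurable (Function.uncurry f)) {t : ℝ} (ht : 0 < t)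
    (hfi : ∀ᵐ ω ∂μ, IntervalIntegrable (fun ν => f ν ω) volume 0 t)
    (hgi : IntervalIntegrable g volume 0 t) {K : ℕ} (hK : 0 < K) {p : ℝ≥0∞} (hp : 1 ≤ p)
    {ε : ℝ≥0∞} (hblock : ∀ i ∈ Finset.range K, eLpNorm (fun ω =>
      (⨍ ν in i * (t / K)..(i + 1 : ℕ) * (t / K), f ν ω) -
        ⨍ ν in i * (t / K)..(i + 1 : ℕ) * (t / K), g ν) p μ ≤ ε) :
    eLpNorm (fun ω => (⨍ ν in 0..t, f ν ω) - ⨍ ν in 0..t, g ν) p μ ≤ ε := by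
  set B : ℕ → Ω → ℝ := fun i ω => (⨍ ν in i * (t / K)..(i + 1 : ℕ) * (t / K), f ν ω) -
    ⨍ ν in i * (t / K)..(i + 1 : ℕ) * (t / K), g ν
  have hsplit : (fun ω => (⨍ ν in 0..t, f ν ω) - ⨍ ν in 0..t, g ν) =ᵐ[μ]
      (K : ℝ)⁻¹ • ∑ i ∈ Finset.range K, B i := by
    filter_upwards [hfi] with ω hω
    simp only [Pi.smul_apply, Finset.sum_apply, smul_eq_mul, B, Finset.sum_sub_distrib,
      intervalAverage_eq_inv_mul_sum hω ht hK, intervalAverage_eq_inv_mul_sum hgi ht hK,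
      mul_sub]
  have hBm : ∀ i ∈ Finset.range K, AEStronglyMeasurable (B i) μ := fun i _ =>
    ((measurable_intervalAverage_of_uncurry hf _ _).sub_const _).aestronglyMeasurable
  rw [eLpNorm_congr_ae hsplit, eLpNorm_const_smul]
  calc ‖(K : ℝ)⁻¹‖ₑ * eLpNorm (∑ i ∈ Finset.range K, B i) p μ
      ≤ (K : ℝ≥0∞)⁻¹ * (K * ε) := by
        gcongr
        · simp [enorm_inv, (Nat.cast_pos.2 hK).ne']
        · refine (eLpNorm_sum_le hBm hp).trans ?_
          simpa only [Finset.card_range, nsmul_eq_mul] using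
            Finset.sum_le_card_nsmul _ _ _ hblock
    _ = ε := ENNReal.inv_mul_cancel_left (by simpa using hK.ne') (by simp)

/-- The von Neumann mean ergodic theorem, for functions rather than elements of `L²`. -/
theorem MeasurePreserving.exists_tendsto_eLpNorm_birkhoffAverage_sub {τ : Ω → Ω}
    (hτ : MeasurePreserving τ μ μ) {φ : Ω → ℝ} (hφ : MemLp φ 2 μ) :
    ∃ g : Ω → ℝ, MemLp g 2 μ ∧
      Tendsto (fun n => eLpNorm (birkhoffAverage ℝ τ φ n - g) 2 μ) atTop (𝓝 0) := by
  set U := (Lp.compMeasurePreservingₗᵢ ℝ (E := ℝ) (p := 2) τ hτ).toContinuousLinearMap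
  set x := hφ.toLp φ
  set g := (U.eqLocus (1 : Lp ℝ 2 μ →L[ℝ] Lp ℝ 2 μ)).orthogonalProjectionOnto x
  have hiter : ∀ k, ⇑((⇑U)^[k] x) =ᵐ[μ] φ ∘ τ^[k] := fun k => by
    have hU : (⇑U)^[k] = Lp.compMeasurePreserving τ^[k] (hτ.iterate k) :=
      Lp.compMeasurePreserving_iterate hτ k
    rw [hU]
    exact (Lp.coeFn_compMeasurePreserving _ _).trans
      ((hτ.iterate k).quasiMeasurePreserving.ae_eq_comp hφ.coeFn_toLp)
  have hsum : ∀ n, ⇑(birkhoffSum U id n x) =ᵐ[μ] birkhoffSum τ φ n := fun n => by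
    induction n with
    | zero =>
      exact Lp.coeFn_zero (E := ℝ) (p := 2) (μ := μ)
    | succ n ih =>
      rw [birkhoffSum_succ, id]
      filter_upwards [Lp.coeFn_add (birkhoffSum U id n x) ((⇑U)^[n] x), ih, hiter n]
        with ω h₀ h₁ h₂
      rw [h₀, Pi.add_apply, h₁, h₂, birkhoffSum_succ]
      rfl
  have havg : ∀ n, ⇑(birkhoffAverage ℝ U id n x - g) =ᵐ[μ] birkhoffAverage ℝ τ φ n - g :=
    fun n => by
      filter_upwards [Lp.coeFn_sub (birkhoffAverage ℝ U id n x) (g : Lp ℝ 2 μ),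
        Lp.coeFn_smul ((n : ℝ)⁻¹) (birkhoffSum U id n x), hsum n] with ω h₁ h₂ h₃
      simp only [birkhoffAverage] at h₁ h₂ ⊢
      rw [h₁, Pi.sub_apply, h₂, Pi.smul_apply, h₃, Pi.sub_apply, smul_eq_mul]
      rfl
  refine ⟨g, Lp.memLp _, ?_⟩
  have hU : ‖U‖ ≤ 1 := LinearIsometry.norm_toContinuousLinearMap_le _
  have := ENNReal.tendsto_ofReal
    (tendsto_iff_norm_sub_tendsto_zero.1 (U.tendsto_birkhoffAverage_orthogonalProjection hU x))
  rw [ENNReal.ofReal_zero] at this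
  refine this.congr fun n => ?_
  rw [← eLpNorm_congr_ae (havg n), Lp.norm_def, ENNReal.ofReal_toReal (Lp.eLpNorm_ne_top _)]

end MeasureTheory

namespace IsErgodicFlow

variable {Ω : Type*} [MeasurableSpace Ω] {μ : Measure Ω} {T : ℝ → Ω → Ω} {X : ℝ → Ω → ℝ}

theorem iterate_one (hT : IsErgodicFlow μ T) (k : ℕ) : (T 1)^[k] = T k := by
  induction k with
  | zero => funext ω; simp [hT.id_zero]
  | succ k ih => funext ω; rw [Function.iterate_succ_apply', ih, hT.flow]; push_cast; ring_nf

theorem apply_flow (hT : IsErgodicFlow μ T) (hXT : ∀ t ω, X t ω = X 0 (T t ω)) (s t : ℝ)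
    (ω : Ω) : X t (T s ω) = X (t + s) ω := by
  rw [hXT, hT.flow, ← hXT]

theorem eLpNorm_eq (hT : IsErgodicFlow μ T) (hXT : ∀ t ω, X t ω = X 0 (T t ω))
    (hX : AEStronglyMeasurable (X 0) μ) (p : ℝ≥0∞) (t : ℝ) :
    eLpNorm (X t) p μ = eLpNorm (X 0) p μ := by
  rw [show X t = X 0 ∘ T t from funext (hXT t)]
  exact eLpNorm_comp_measurePreserving hX (hT.measurePreserving t)

theorem integral_eq (hT : IsErgodicFlow μ T) (hXT : ∀ t ω, X t ω = X 0 (T t ω))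
    (hX : AEStronglyMeasurable (X 0) μ) (t : ℝ) : ∫ ω, X t ω ∂μ = ∫ ω, X 0 ω ∂μ := by
  simp_rw [hXT t]
  rw [← integral_map (hT.measurable t).aemeasurable (by rwa [(hT.measurePreserving t).map_eq]),
    (hT.measurePreserving t).map_eq]

theorem ae_intervalIntegrable [IsProbabilityMeasure μ] (hT : IsErgodicFlow μ T)
    (hXT : ∀ t ω, X t ω = X 0 (T t ω)) (hX : Measurable (Function.uncurry X)) {p : ℝ≥0∞}
    (hp : 1 ≤ p) (hX0 : MemLp (X 0) p μ) (a b : ℝ) :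
    ∀ᵐ ω ∂μ, IntervalIntegrable (fun r => X r ω) volume a b :=
  ae_intervalIntegrable_of_eLpNorm_le hX hp hX0.eLpNorm_ne_top fun ν _ =>
    (hT.eLpNorm_eq hXT hX.of_uncurry_left.aestronglyMeasurable p ν).le

theorem exists_ae_eq_const_of_invariant [IsProbabilityMeasure μ] {β : Type*} [MeasurableSpace β]
    [Nonempty β] [HasCountableSeparatingOn β MeasurableSet univ] (hT : IsErgodicFlow μ T)
    {f : Ω → β} (hf : Measurable f) (hinv : ∀ t ω, f (T t ω) = f ω) :
    ∃ c, f =ᵐ[μ] Function.const Ω c := by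
  refine exists_eventuallyEq_const_of_forall_separating MeasurableSet fun U hU => ?_
  have hpre : ∀ t, T t ⁻¹' (f ⁻¹' U) = f ⁻¹' U := fun t => by
    ext ω; simp [hinv]
  rcases hT.ergodic _ (hf hU) hpre with h0 | h1
  · exact .inr (measure_eq_zero_iff_ae_notMem.1 h0)
  · exact .inl (ae_iff.2 ((prob_compl_eq_zero_iff (hf hU)).2 h1))

/-- `limsup_k f_k` is exactly invariant under the flow, so ergodicity applies to it, and it
agrees with the limit `g` a.e. -/
theorem exists_ae_eq_const_of_tendsto [IsProbabilityMeasure μ] (hT : IsErgodicFlow μ T)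
    {f : ℕ → Ω → ℝ} {g : Ω → ℝ} (hf : ∀ k, Measurable (f k)) {M : ℝ} (hM : ∀ k ω, M ≤ f k ω)
    (hshift : ∀ h : ℝ, ∃ e : ℕ → ℝ, Tendsto e atTop (𝓝 0) ∧ ∀ k ω, |f k (T h ω) - f k ω| ≤ e k)
    (hlim : ∀ᵐ ω ∂μ, Tendsto (fun k => f k ω) atTop (𝓝 (g ω))) :
    ∃ c, g =ᵐ[μ] Function.const Ω c := by
  set F : Ω → ℝ≥0∞ := fun ω => limsup (fun k => ENNReal.ofReal (f k ω - M)) atTop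
  have hle : ∀ ω ω' (e : ℕ → ℝ), Tendsto e atTop (𝓝 0) → (∀ k, f k ω ≤ f k ω' + e k) →
      F ω ≤ F ω' := by
    intro ω ω' e he hbd
    refine ENNReal.le_of_forall_pos_le_add fun ε hε _ => ?_
    calc F ω ≤ limsup (fun k => ENNReal.ofReal (f k ω' - M) + ε) atTop := by
          refine limsup_le_limsup ?_
          filter_upwards [he.eventually (gt_mem_nhds (NNReal.coe_pos.2 hε))] with k hk
          calc ENNReal.ofReal (f k ω - M) ≤ ENNReal.ofReal (f k ω' - M + ε) :=
                ENNReal.ofReal_le_ofReal (by linarith [hbd k])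
            _ ≤ _ := by simpa using ENNReal.ofReal_add_le (p := f k ω' - M) (q := ε)
      _ = F ω' + ε := limsup_add_const _ _ _ (by isBoundedDefault) (by isBoundedDefault)
  have hinv : ∀ h ω, F (T h ω) = F ω := fun h ω => by
    obtain ⟨e, he, hbd⟩ := hshift h
    exact le_antisymm (hle _ _ e he fun k => by linarith [(abs_le.1 (hbd k ω)).2])
      (hle _ _ e he fun k => by linarith [(abs_le.1 (hbd k ω)).1])
  have hFm : Measurable F :=
    Measurable.limsup fun k => ENNReal.measurable_ofReal.comp ((hf k).sub_const M)
  obtain ⟨c, hc⟩ := hT.exists_ae_eq_const_of_invariant hFm hinv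
  refine ⟨c.toReal + M, ?_⟩
  filter_upwards [hlim, hc] with ω hω hcω
  have hFω : F ω = ENNReal.ofReal (g ω - M) :=
    (ENNReal.tendsto_ofReal (hω.sub_const M)).limsup_eq
  have hgM : M ≤ g ω := ge_of_tendsto' hω (fun k => hM k ω)
  have := congrArg ENNReal.toReal (hFω.symm.trans hcω)
  rw [ENNReal.toReal_ofReal (by linarith)] at this
  simp only [Function.const_apply] at this ⊢
  linarith

section Bounded

variable (hT : IsErgodicFlow μ T) (hXT : ∀ t ω, X t ω = X 0 (T t ω))
  (hX : Measurable (Function.uncurry X)) {M : ℝ} (hM : ∀ r ω, |X r ω| ≤ M)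
include hT hXT hX hM

theorem birkhoffAverage_intervalIntegral_eq (n : ℕ) (ω : Ω) :
    birkhoffAverage ℝ (T 1) (fun ω => ∫ r in 0..1, X r ω) n ω = ⨍ r in 0..(n : ℝ), X r ω := by
  have hblock : ∀ k : ℕ, ∫ r in 0..1, X r ((T 1)^[k] ω) = ∫ r in (k : ℝ)..(k + 1 : ℕ), X r ω :=
    fun k => by
      rw [hT.iterate_one]
      simp_rw [hT.apply_flow hXT]
      rw [intervalIntegral.integral_comp_add_right (fun r => X r ω)]
      push_cast; ring_nf
  rw [birkhoffAverage, birkhoffSum, interval_average_eq, sub_zero]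
  simp_rw [hblock]
  rw [intervalIntegral.sum_integral_adjacent_intervals (a := fun k : ℕ => (k : ℝ)) fun k _ =>
    intervalIntegrable_of_abs_le hX.of_uncurry_right (fun r => hM r ω) _ _]
  simp

theorem integral_intervalAverage_eq [IsProbabilityMeasure μ] {s : ℝ} (hs : s ≠ 0) :
    ∫ ω, ⨍ r in 0..s, X r ω ∂μ = ∫ ω, X 0 ω ∂μ := by
  set ν := volume.restrict (Ι 0 s)
  have : IsFiniteMeasure ν := isFiniteMeasure_restrict.2 (by simp)
  have : NeZero ν := ⟨by simp [ν, hs]⟩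
  have hint : Integrable (Function.uncurry fun ω r => X r ω) (μ.prod ((ν univ)⁻¹ • ν)) :=
    (integrable_const M).mono' (hX.comp measurable_swap).aestronglyMeasurable
      (Eventually.of_forall fun q => by simpa [Function.uncurry] using hM q.2 q.1)
  calc ∫ ω, ⨍ r in 0..s, X r ω ∂μ = ∫ r, ∫ ω, X r ω ∂μ ∂((ν univ)⁻¹ • ν) :=
        integral_integral_swap hint
    _ = ∫ ω, X 0 ω ∂μ := by
        simp_rw [hT.integral_eq hXT hX.of_uncurry_left.aestronglyMeasurable]
        simp

/-- Von Neumann's theorem for the time-one map, applied to `∫₀¹ X r dr`, gives an `L²` limit;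
it is a.e. constant by ergodicity of the whole flow, and the constant is read off the means. -/
theorem tendsto_eLpNorm_two_intervalAverage_nat_sub [IsProbabilityMeasure μ] :
    Tendsto (fun n : ℕ =>
      eLpNorm (fun ω => (⨍ r in 0..(n : ℝ), X r ω) - ∫ ω', X 0 ω' ∂μ) 2 μ) atTop (𝓝 0) := by
  set S : ℕ → Ω → ℝ := fun n ω => ⨍ r in 0..(n : ℝ), X r ω
  have hSm : ∀ n, Measurable (S n) := fun n => measurable_intervalAverage_of_uncurry hX 0 n
  have hSbd : ∀ n ω, |S n ω| ≤ M := fun n ω =>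
    abs_intervalAverage_le (fun r _ => hM r ω) ((abs_nonneg _).trans (hM 0 ω))
  have hφ : MemLp (fun ω => ∫ r in 0..1, X r ω) 2 μ :=
    .of_bound (measurable_intervalIntegral_of_uncurry hX 0 1).aestronglyMeasurable M
      (Eventually.of_forall fun ω => by
        simpa using abs_intervalIntegral_le_of_abs_le (a := 0) (b := 1) fun r _ => hM r ω)
  obtain ⟨g, hg, hconv⟩ := (hT.measurePreserving 1).exists_tendsto_eLpNorm_birkhoffAverage_sub hφ
  simp_rw [funext (birkhoffAverage_intervalIntegral_eq hT hXT hX hM _)] at hconv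
  obtain ⟨ns, hns, hae⟩ := (tendstoInMeasure_of_tendsto_eLpNorm two_ne_zero
    (fun n => (hSm n).aestronglyMeasurable) hg.aestronglyMeasurable hconv).exists_seq_tendsto_ae
  have hshift : ∀ h : ℝ, ∃ e : ℕ → ℝ, Tendsto e atTop (𝓝 0) ∧
      ∀ k ω, |S (ns k) (T h ω) - S (ns k) ω| ≤ e k := fun h =>
    ⟨fun k => 2 * M * |h| / ns k,
      (tendsto_const_div_atTop_nhds_zero_nat _).comp hns.tendsto_atTop, fun k ω => by
        simp_rw [S, hT.apply_flow hXT]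
        exact abs_intervalAverage_add_sub_le hX.of_uncurry_right (fun r => hM r ω)
          (Nat.cast_nonneg _) h⟩
  obtain ⟨c, hc⟩ := hT.exists_ae_eq_const_of_tendsto (fun k => hSm (ns k))
    (fun k ω => neg_le_of_abs_le (hSbd (ns k) ω)) hshift hae
  have hc_eq : c = ∫ ω, X 0 ω ∂μ := by
    have hmean := integral_eq_of_tendsto_eLpNorm one_le_two (fun n =>
      (integrable_const M).mono' (hSm n).aestronglyMeasurable
        (Eventually.of_forall fun ω => by simpa using hSbd n ω)) hg.aestronglyMeasurable hconv
      ((eventually_ge_atTop 1).mono fun n hn =>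
        integral_intervalAverage_eq hT hXT hX hM (by positivity))
    simpa [integral_congr_ae hc] using hmean
  refine hconv.congr fun n => eLpNorm_congr_ae ?_
  filter_upwards [hc] with ω hω
  simp [hω, hc_eq]

theorem tendsto_eLpNorm_intervalAverage_sub_of_abs_le [IsProbabilityMeasure μ] {p : ℝ≥0∞}
    (hp : 1 ≤ p) (hp' : p ≠ ∞) :
    Tendsto (fun s : ℝ =>
      eLpNorm (fun ω => (⨍ r in 0..s, X r ω) - ∫ ω', X 0 ω' ∂μ) p μ) atTop (𝓝 0) := by
  set c := ∫ ω', X 0 ω' ∂μ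
  have hA : ∀ s, Measurable fun ω => ⨍ r in 0..s, X r ω :=
    measurable_intervalAverage_of_uncurry hX 0
  have hnat : Tendsto (fun n : ℕ =>
      eLpNorm (fun ω => (⨍ r in 0..(n : ℝ), X r ω) - c) p μ) atTop (𝓝 0) :=
    tendsto_eLpNorm_sub_of_tendstoInMeasure_of_abs_le hp hp' (g := fun _ => c)
      (fun n => (hA n).aestronglyMeasurable)
      (fun n ω => abs_intervalAverage_le (fun r _ => hM r ω) ((abs_nonneg _).trans (hM 0 ω)))
      (memLp_const c) (tendstoInMeasure_of_tendsto_eLpNorm two_ne_zero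
        (fun n => (hA n).aestronglyMeasurable) aestronglyMeasurable_const
        (tendsto_eLpNorm_two_intervalAverage_nat_sub hT hXT hX hM))
  have hfloor : ∀ s : ℝ, 1 ≤ s → eLpNorm (fun ω => (⨍ r in 0..s, X r ω) - c) p μ ≤
      eLpNorm (fun ω => (⨍ r in 0..(⌊s⌋₊ : ℝ), X r ω) - c) p μ + ENNReal.ofReal (2 * M / s) := by
    intro s hs
    have hn : (0 : ℝ) < ⌊s⌋₊ := by exact_mod_cast Nat.floor_pos.2 hs
    have hdiff : eLpNorm (fun ω => (⨍ r in 0..s, X r ω) - ⨍ r in 0..(⌊s⌋₊ : ℝ), X r ω) p μ ≤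
        ENNReal.ofReal (2 * M / s) := by
      refine (eLpNorm_le_of_ae_bound (C := 2 * M / s) (Eventually.of_forall fun ω => ?_)).trans
        (by simp)
      have hM0 : 0 ≤ M := (abs_nonneg _).trans (hM 0 ω)
      refine (abs_intervalAverage_sub_intervalAverage_le hX.of_uncurry_right (fun r => hM r ω) hn
        (Nat.floor_le (by linarith))).trans ?_
      exact div_le_div_of_nonneg_right (mul_le_of_le_one_right (by positivity)
        (by linarith [Nat.lt_floor_add_one s])) (by linarith)
    calc _ = eLpNorm ((fun ω => (⨍ r in 0..(⌊s⌋₊ : ℝ), X r ω) - c) +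
          fun ω => (⨍ r in 0..s, X r ω) - ⨍ r in 0..(⌊s⌋₊ : ℝ), X r ω) p μ := by
          congr 1; ext ω; simp
      _ ≤ _ := (eLpNorm_add_le ((hA _).sub_const c).aestronglyMeasurable
          ((hA s).sub (hA _)).aestronglyMeasurable hp).trans (add_le_add le_rfl hdiff)
  have hupper : Tendsto (fun s : ℝ => eLpNorm (fun ω => (⨍ r in 0..(⌊s⌋₊ : ℝ), X r ω) - c) p μ +
      ENNReal.ofReal (2 * M / s)) atTop (𝓝 0) := by
    simpa using (hnat.comp tendsto_nat_floor_atTop).add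
      (ENNReal.tendsto_ofReal (tendsto_const_nhds.div_atTop tendsto_id))
  exact tendsto_of_tendsto_of_tendsto_of_le_of_le' tendsto_const_nhds hupper
    (Eventually.of_forall fun _ => zero_le) ((eventually_ge_atTop 1).mono hfloor)

end Bounded

theorem eLpNorm_intervalAverage_sub_le [IsProbabilityMeasure μ] (hT : IsErgodicFlow μ T)
    {Y : ℝ → Ω → ℝ} (hXT : ∀ t ω, X t ω = X 0 (T t ω)) (hYT : ∀ t ω, Y t ω = Y 0 (T t ω))
    (hX : Measurable (Function.uncurry X)) (hY : Measurable (Function.uncurry Y)) {p : ℝ≥0∞}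
    (hp : 1 ≤ p) (hp' : p ≠ ∞) (hX0 : MemLp (X 0) p μ) (hY0 : MemLp (Y 0) p μ) {s : ℝ}
    (hs : 0 < s) :
    eLpNorm (fun ω => (⨍ r in 0..s, X r ω) - ∫ ω', X 0 ω' ∂μ) p μ ≤
      eLpNorm (fun ω => (⨍ r in 0..s, Y r ω) - ∫ ω', Y 0 ω' ∂μ) p μ +
        2 * eLpNorm (X 0 - Y 0) p μ := by
  have hDT : ∀ t ω, (X t - Y t) ω = (X 0 - Y 0) (T t ω) := fun t ω => by
    simp [hXT t ω, hYT t ω]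
  have hdecomp : (fun ω => (⨍ r in 0..s, X r ω) - ∫ ω', X 0 ω' ∂μ) =ᵐ[μ]
      (fun ω => ⨍ r in 0..s, X r ω - Y r ω) +
        (fun ω => (⨍ r in 0..s, Y r ω) - ∫ ω', Y 0 ω' ∂μ) -
          fun _ => ∫ ω', (X 0 - Y 0) ω' ∂μ := by
    filter_upwards [hT.ae_intervalIntegrable hXT hX hp hX0 0 s,
      hT.ae_intervalIntegrable hYT hY hp hY0 0 s] with ω hXω hYω
    simp only [Pi.add_apply, Pi.sub_apply, interval_average_eq,
      intervalIntegral.integral_sub hXω hYω, integral_sub (hX0.integrable hp) (hY0.integrable hp)]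
    rw [smul_sub]
    ring
  have hA : ∀ {Z : ℝ → Ω → ℝ}, Measurable (Function.uncurry Z) →
      AEStronglyMeasurable (fun ω => ⨍ r in 0..s, Z r ω) μ := fun hZ =>
    (measurable_intervalAverage_of_uncurry hZ 0 s).aestronglyMeasurable
  have hXY : Measurable (Function.uncurry fun t ω => X t ω - Y t ω) := hX.sub hY
  have hXY0 : AEStronglyMeasurable (X 0 - Y 0) μ :=
    hX0.aestronglyMeasurable.sub hY0.aestronglyMeasurable
  rw [eLpNorm_congr_ae hdecomp]
  calc _ ≤ eLpNorm (fun ω => ⨍ r in 0..s, X r ω - Y r ω) p μ +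
        eLpNorm (fun ω => (⨍ r in 0..s, Y r ω) - ∫ ω', Y 0 ω' ∂μ) p μ +
        eLpNorm (fun _ => ∫ ω', (X 0 - Y 0) ω' ∂μ) p μ :=
        (eLpNorm_sub_le ((hA hXY).add ((hA hY).sub aestronglyMeasurable_const))
          aestronglyMeasurable_const hp).trans
          (add_le_add_left (eLpNorm_add_le (hA hXY)
            ((hA hY).sub aestronglyMeasurable_const) hp) _)
    _ ≤ eLpNorm (X 0 - Y 0) p μ + eLpNorm (fun ω => (⨍ r in 0..s, Y r ω) - ∫ ω', Y 0 ω' ∂μ) p μ +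
        eLpNorm (X 0 - Y 0) p μ := by
        gcongr
        · exact eLpNorm_intervalAverage_le hXY hp hp' hs fun ν _ =>
            (hT.eLpNorm_eq (X := fun t => X t - Y t) hDT hXY0 p ν).le
        · rw [eLpNorm_const_of_isProbabilityMeasure (zero_lt_one.trans_le hp).ne']
          exact enorm_integral_le_eLpNorm hp hXY0
    _ = _ := by ring

end IsErgodicFlow

namespace IsStatErgodic

variable {Ω : Type*} [MeasurableSpace Ω] {μ : Measure Ω} [IsProbabilityMeasure μ]
  {X : ℝ → Ω → ℝ}

/-- The `Lᵖ` ergodic theorem; truncation reduces it to the bounded case. -/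
theorem tendsto_eLpNorm_intervalAverage_sub (hXse : IsStatErgodic μ X)
    (hX : Measurable (Function.uncurry X)) {p : ℝ≥0∞} (hp : 1 ≤ p) (hp' : p ≠ ∞)
    (hX0 : MemLp (X 0) p μ) :
    Tendsto (fun s : ℝ =>
      eLpNorm (fun ω => (⨍ r in 0..s, X r ω) - ∫ ω', X 0 ω' ∂μ) p μ) atTop (𝓝 0) := by
  obtain ⟨-, T, hT, hXT⟩ := hXse
  refine ENNReal.tendsto_nhds_zero.2 fun ε hε => ?_
  obtain ⟨r, -, hr₀, hrε⟩ := ENNReal.lt_iff_exists_real_btwn.1 hε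
  have hδ : 0 < r / 3 := by simpa using hr₀
  obtain ⟨M, hM⟩ := hX0.exists_eLpNorm_sub_truncation_le hX.of_uncurry_left hδ
  set Y : ℝ → Ω → ℝ := fun t => ProbabilityTheory.truncation (X t) M
  have hY : Measurable (Function.uncurry Y) :=
    (measurable_id.indicator measurableSet_Ioc).comp hX
  have hYT : ∀ t ω, Y t ω = Y 0 (T t ω) := fun t ω => by
    simp only [Y, ProbabilityTheory.truncation, Function.comp_apply, hXT t ω]
  have hY0 : MemLp (Y 0) p μ := hX.of_uncurry_left.aestronglyMeasurable.memLp_truncation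
  have hYlim := hT.tendsto_eLpNorm_intervalAverage_sub_of_abs_le hYT hY
    (fun t ω => ProbabilityTheory.abs_truncation_le_bound (X t) M ω) hp hp'
  filter_upwards [ENNReal.tendsto_nhds_zero.1 hYlim _ (ENNReal.ofReal_pos.2 hδ),
    eventually_gt_atTop 0] with s hYs hs
  calc _ ≤ _ + 2 * eLpNorm (X 0 - Y 0) p μ :=
        hT.eLpNorm_intervalAverage_sub_le hXT hYT hX hY hp hp' hX0 hY0 hs
    _ ≤ ENNReal.ofReal (r / 3) + 2 * ENNReal.ofReal (r / 3) := by gcongr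
    _ = ENNReal.ofReal r := by
        rw [← ENNReal.ofReal_ofNat 2, ← ENNReal.ofReal_mul (by norm_num),
          ← ENNReal.ofReal_add hδ.le (by positivity)]
        ring_nf
    _ ≤ ε := hrε.le

theorem tendsto_eLpNorm_intervalAverage_mul_sub (hXse : IsStatErgodic μ X)
    (hX : Measurable (Function.uncurry X)) {p : ℝ≥0∞} (hp : 1 ≤ p) (hp' : p ≠ ∞)
    (hX0 : MemLp (X 0) p μ) {a b : ℝ} (hab : a < b) :
    Tendsto (fun N : ℕ =>
      eLpNorm (fun ω => (⨍ ν in a..b, X (N * ν) ω) - ∫ ω', X 0 ω' ∂μ) p μ) atTop (𝓝 0) := by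
  have hlim := (hXse.tendsto_eLpNorm_intervalAverage_sub hX hp hp' hX0).comp
    (tendsto_natCast_atTop_atTop.atTop_mul_const (sub_pos.2 hab))
  obtain ⟨-, T, hT, hXT⟩ := hXse
  refine hlim.congr' ((eventually_ge_atTop 1).mono fun N hN => ?_)
  have hN : (N : ℝ) ≠ 0 := by positivity
  have hba : b - a ≠ 0 := (sub_pos.2 hab).ne'
  have hrescale : ∀ ω, ⨍ ν in a..b, X (N * ν) ω = ⨍ r in 0..N * (b - a), X r (T (N * a) ω) :=
    fun ω => by
      simp_rw [interval_average_eq, hT.apply_flow hXT,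
        intervalIntegral.integral_comp_mul_left (fun r => X r ω) hN,
        intervalIntegral.integral_comp_add_right (fun r => X r ω), smul_smul]
      congr 1
      · rw [sub_zero]; field_simp
      · ring_nf
  simp only [Function.comp_apply, hrescale]
  exact (eLpNorm_comp_measurePreserving (f := T (N * a)) (g := fun ω =>
    (⨍ r in 0..N * (b - a), X r ω) - ∫ ω', X 0 ω' ∂μ)
    ((measurable_intervalAverage_of_uncurry hX 0 _).sub_const _).aestronglyMeasurable
    (hT.measurePreserving _)).symm

end IsStatErgodic

namespace IsLSA

variable {Ω : Type*} [MeasurableSpace Ω] {μ : Measure Ω}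
  {Y : ℕ → ℝ → Ω → ℝ} {Ytil : ℝ → ℝ → Ω → ℝ} {p : ℝ}

theorem one_le_ofReal (hLSA : IsLSA μ Y Ytil p) : 1 ≤ ENNReal.ofReal p :=
  ENNReal.one_le_ofReal.2 hLSA.one_le

theorem eLpNorm_eq (hLSA : IsLSA μ Y Ytil p) {u : ℝ} (hu : 0 < u) (s : ℝ) :
    eLpNorm (Ytil u s) (ENNReal.ofReal p) μ = eLpNorm (Ytil u 0) (ENNReal.ofReal p) μ := by
  obtain ⟨-, T, hT, hXT⟩ := hLSA.statErg u hu
  exact hT.eLpNorm_eq hXT (hLSA.measYtil u).of_uncurry_left.aestronglyMeasurable _ s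

theorem memLp (hLSA : IsLSA μ Y Ytil p) {u : ℝ} (hu : 0 < u) :
    MemLp (Ytil u 0) (ENNReal.ofReal p) μ := by
  obtain ⟨B, hB, hBu⟩ := hLSA.bddLp
  exact ⟨(hLSA.measYtil u).of_uncurry_left.aestronglyMeasurable, (hBu u hu).trans_lt hB⟩

theorem ae_intervalIntegrable [IsProbabilityMeasure μ] (hLSA : IsLSA μ Y Ytil p) {N : ℕ}
    (hN : 1 ≤ N) {a b : ℝ} (ha : 0 ≤ a) (hb : 0 ≤ b) :
    ∀ᵐ ω ∂μ, IntervalIntegrable (fun ν => Y N ν ω) volume a b := by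
  obtain ⟨B, hB, hBu⟩ := hLSA.bddLp
  obtain ⟨C, -, -, happrox⟩ := hLSA.approx
  refine ae_intervalIntegrable_of_eLpNorm_le (hLSA.measY N) hLSA.one_le_ofReal
    (B := ENNReal.ofReal (C / N) + B) (ENNReal.add_ne_top.2 ⟨ENNReal.ofReal_ne_top, hB.ne⟩)
    fun ν hν => ?_
  have hν : 0 < ν := (le_min ha hb).trans_lt hν.1
  calc eLpNorm (Y N ν) (ENNReal.ofReal p) μ
      = eLpNorm ((fun ω => Y N ν ω - Ytil ν (N * ν) ω) + Ytil ν (N * ν)) (ENNReal.ofReal p) μ := by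
        congr 1; ext ω; simp
    _ ≤ eLpNorm (fun ω => Y N ν ω - Ytil ν (N * ν) ω) (ENNReal.ofReal p) μ +
          eLpNorm (Ytil ν (N * ν)) (ENNReal.ofReal p) μ :=
        eLpNorm_add_le (((hLSA.measY N).of_uncurry_left.sub
          (hLSA.measYtil ν).of_uncurry_left).aestronglyMeasurable)
          (hLSA.measYtil ν).of_uncurry_left.aestronglyMeasurable hLSA.one_le_ofReal
    _ ≤ ENNReal.ofReal (C / N) + B := by
        rw [hLSA.eLpNorm_eq hν]
        exact add_le_add (happrox N ν hN hν) (hBu ν hν)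

section Mean

variable {C : ℝ} (hLip : ∀ u v t : ℝ, 0 < u → 0 < v →
  eLpNorm (fun ω => Ytil u t ω - Ytil v t ω) (ENNReal.ofReal p) μ ≤ ENNReal.ofReal (C * |u - v|))
include hLip

theorem abs_integral_sub_integral_le [IsProbabilityMeasure μ] (hLSA : IsLSA μ Y Ytil p)
    (hC : 0 ≤ C) {u v : ℝ} (hu : 0 < u) (hv : 0 < v) :
    |∫ ω, Ytil u 0 ω ∂μ - ∫ ω, Ytil v 0 ω ∂μ| ≤ C * |u - v| := by
  rw [← integral_sub ((hLSA.memLp hu).integrable hLSA.one_le_ofReal)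
    ((hLSA.memLp hv).integrable hLSA.one_le_ofReal), ← ENNReal.ofReal_le_ofReal_iff (by positivity),
    ← Real.enorm_eq_ofReal_abs]
  exact (enorm_integral_le_eLpNorm hLSA.one_le_ofReal ((hLSA.memLp hu).aestronglyMeasurable.sub
    (hLSA.memLp hv).aestronglyMeasurable)).trans (hLip u v 0 hu hv)

theorem intervalIntegrable_mean [IsProbabilityMeasure μ] (hLSA : IsLSA μ Y Ytil p) (hC : 0 ≤ C)
    {a b : ℝ} (ha : 0 ≤ a) (hb : 0 ≤ b) :
    IntervalIntegrable (fun u => ∫ ω, Ytil u 0 ω ∂μ) volume a b := by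
  obtain ⟨B, hB, hBu⟩ := hLSA.bddLp
  have hsub : Ι a b ⊆ Ioi 0 := fun ν hν => (le_min ha hb).trans_lt hν.1
  have : IsFiniteMeasure (volume.restrict (Ι a b)) := isFiniteMeasure_restrict.2 (by simp)
  have hcont : ContinuousOn (fun u => ∫ ω, Ytil u 0 ω ∂μ) (Ioi 0) :=
    (LipschitzOnWith.of_dist_le' fun u hu v hv => by
      simpa [Real.dist_eq] using hLSA.abs_integral_sub_integral_le hLip hC hu hv).continuousOn
  refine intervalIntegrable_iff.2 ((integrable_const B.toReal).mono'
    ((hcont.mono hsub).aestronglyMeasurable measurableSet_uIoc)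
    ((ae_restrict_mem measurableSet_uIoc).mono fun u hu => ?_))
  have hu0 : 0 < u := hsub hu
  rw [Real.norm_eq_abs, ← ENNReal.ofReal_le_ofReal_iff ENNReal.toReal_nonneg,
    ← Real.enorm_eq_ofReal_abs, ENNReal.ofReal_toReal hB.ne]
  exact (enorm_integral_le_eLpNorm hLSA.one_le_ofReal (hLSA.memLp hu0).aestronglyMeasurable).trans
    (hBu u hu0)

theorem abs_integral_sub_intervalAverage_le [IsProbabilityMeasure μ] (hLSA : IsLSA μ Y Ytil p)
    (hC : 0 ≤ C) {a b : ℝ} (ha : 0 ≤ a) (hab : a < b) :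
    |∫ ω, Ytil b 0 ω ∂μ - ⨍ ν in a..b, ∫ ω, Ytil ν 0 ω ∂μ| ≤ C * (b - a) := by
  have hb : 0 < b := ha.trans_lt hab
  have hmean : ∫ ω, Ytil b 0 ω ∂μ - ⨍ ν in a..b, ∫ ω, Ytil ν 0 ω ∂μ =
      ⨍ ν in a..b, (∫ ω, Ytil b 0 ω ∂μ - ∫ ω, Ytil ν 0 ω ∂μ) := by
    rw [interval_average_eq, interval_average_eq, intervalIntegral.integral_sub
      intervalIntegrable_const (hLSA.intervalIntegrable_mean hLip hC ha hb.le),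
      intervalIntegral.integral_const, smul_sub, smul_smul,
      inv_mul_cancel₀ (sub_ne_zero.2 hab.ne'), one_smul]
  rw [hmean]
  refine abs_intervalAverage_le (fun ν hν => ?_) (mul_nonneg hC (sub_nonneg.2 hab.le))
  rw [uIoc_of_le hab.le] at hν
  refine (hLSA.abs_integral_sub_integral_le hLip hC hb (ha.trans_lt hν.1)).trans ?_
  rw [abs_of_nonneg (sub_nonneg.2 hν.2)]
  gcongr
  exact hν.1.le

theorem eLpNorm_sub_le (hLSA : IsLSA μ Y Ytil p) (happrox : ∀ (N : ℕ) (t : ℝ), 1 ≤ N → 0 < t →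
      eLpNorm (fun ω => Y N t ω - Ytil t (N * t) ω) (ENNReal.ofReal p) μ ≤
        ENNReal.ofReal (C / N)) {N : ℕ} (hN : 1 ≤ N) {ν u : ℝ} (hν : 0 < ν) (hu : 0 < u) :
    eLpNorm (fun ω => Y N ν ω - Ytil u (N * ν) ω) (ENNReal.ofReal p) μ ≤
      ENNReal.ofReal (C / N) + ENNReal.ofReal (C * |ν - u|) := by
  calc eLpNorm (fun ω => Y N ν ω - Ytil u (N * ν) ω) (ENNReal.ofReal p) μ
      = eLpNorm ((fun ω => Y N ν ω - Ytil ν (N * ν) ω) +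
          fun ω => Ytil ν (N * ν) ω - Ytil u (N * ν) ω) (ENNReal.ofReal p) μ := by
        congr 1; ext ω; simp
    _ ≤ _ := (eLpNorm_add_le (((hLSA.measY N).of_uncurry_left.sub
          (hLSA.measYtil ν).of_uncurry_left).aestronglyMeasurable)
          (((hLSA.measYtil ν).of_uncurry_left.sub
          (hLSA.measYtil u).of_uncurry_left).aestronglyMeasurable) hLSA.one_le_ofReal).trans
        (add_le_add (happrox N ν hN hν) (hLip ν u _ hν hu))

/-- On a block `(a, b]`, `Y_N` is compared with the stationary process `Ỹ_b(N ·)`, whose block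
averages converge by the ergodic theorem; the price is `C / N + C (b - a)` in `Lᵖ` and
`C (b - a)` for the mean function. -/
theorem eventually_eLpNorm_intervalAverage_sub_le [IsProbabilityMeasure μ]
    (hLSA : IsLSA μ Y Ytil p) (hC : 0 ≤ C) (happrox : ∀ (N : ℕ) (t : ℝ), 1 ≤ N → 0 < t →
      eLpNorm (fun ω => Y N t ω - Ytil t (N * t) ω) (ENNReal.ofReal p) μ ≤
        ENNReal.ofReal (C / N)) {a b : ℝ} (ha : 0 ≤ a) (hab : a < b) {η : ℝ} (hη : 0 < η) :
    ∀ᶠ N : ℕ in atTop, eLpNorm (fun ω =>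
      (⨍ ν in a..b, Y N ν ω) - ⨍ ν in a..b, ∫ ω', Ytil ν 0 ω' ∂μ) (ENNReal.ofReal p) μ ≤
        ENNReal.ofReal (2 * C * (b - a) + η) := by
  have hq := hLSA.one_le_ofReal
  have hb : 0 < b := ha.trans_lt hab
  set mb := ∫ ω, Ytil b 0 ω ∂μ
  have hergodic := (hLSA.statErg b hb).tendsto_eLpNorm_intervalAverage_mul_sub (hLSA.measYtil b)
    hq ENNReal.ofReal_ne_top (hLSA.memLp hb) hab
  have hCN : ∀ᶠ N : ℕ in atTop, C / N ≤ η / 2 :=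
    (tendsto_const_div_atTop_nhds_zero_nat C).eventually (ge_mem_nhds (half_pos hη))
  filter_upwards [ENNReal.tendsto_nhds_zero.1 hergodic _ (ENNReal.ofReal_pos.2 (half_pos hη)),
    hCN, eventually_ge_atTop 1] with N hergN hCN hN
  have hYb : Measurable (Function.uncurry fun ν ω => Ytil b (N * ν) ω) :=
    (hLSA.measYtil b).comp ((measurable_fst.const_mul _).prodMk measurable_snd)
  have hYN : Measurable (Function.uncurry fun ν ω => Y N ν ω - Ytil b (N * ν) ω) :=
    (hLSA.measY N).sub hYb
  have hdecomp : (fun ω => (⨍ ν in a..b, Y N ν ω) - ⨍ ν in a..b, ∫ ω', Ytil ν 0 ω' ∂μ) =ᵐ[μ]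
      (fun ω => ⨍ ν in a..b, Y N ν ω - Ytil b (N * ν) ω) +
        (fun ω => (⨍ ν in a..b, Ytil b (N * ν) ω) - mb) +
          fun _ => mb - ⨍ ν in a..b, ∫ ω', Ytil ν 0 ω' ∂μ := by
    filter_upwards [hLSA.ae_intervalIntegrable hN ha hb.le, ae_intervalIntegrable_of_eLpNorm_le hYb
      hq (a := a) (b := b) (hLSA.memLp hb).eLpNorm_ne_top fun ν _ => (hLSA.eLpNorm_eq hb _).le]
      with ω hYω hYbω
    simp only [Pi.add_apply, interval_average_eq, intervalIntegral.integral_sub hYω hYbω, smul_sub]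
    ring
  have hblock : eLpNorm (fun ω => ⨍ ν in a..b, Y N ν ω - Ytil b (N * ν) ω) (ENNReal.ofReal p) μ ≤
      ENNReal.ofReal (C / N) + ENNReal.ofReal (C * (b - a)) :=
    eLpNorm_intervalAverage_le hYN hq ENNReal.ofReal_ne_top hab fun ν hν => by
      refine (hLSA.eLpNorm_sub_le hLip happrox hN (ha.trans_lt hν.1) hb).trans ?_
      rw [abs_of_nonpos (by linarith [hν.2])]
      gcongr
      linarith [hν.1]
  have hmean : eLpNorm (fun _ : Ω => mb - ⨍ ν in a..b, ∫ ω', Ytil ν 0 ω' ∂μ) (ENNReal.ofReal p) μ ≤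
      ENNReal.ofReal (C * (b - a)) := by
    rw [eLpNorm_const_of_isProbabilityMeasure (zero_lt_one.trans_le hq).ne',
      Real.enorm_eq_ofReal_abs]
    exact ENNReal.ofReal_le_ofReal (hLSA.abs_integral_sub_intervalAverage_le hLip hC ha hab)
  rw [eLpNorm_congr_ae hdecomp]
  calc _ ≤ ENNReal.ofReal (C / N) + ENNReal.ofReal (C * (b - a)) + ENNReal.ofReal (η / 2) +
        ENNReal.ofReal (C * (b - a)) := by
        have h₁ := (measurable_intervalAverage_of_uncurry hYN a b).aestronglyMeasurable (μ := μ)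
        have h₂ := ((measurable_intervalAverage_of_uncurry hYb a b).sub_const
          mb).aestronglyMeasurable (μ := μ)
        exact (eLpNorm_add_le (h₁.add h₂) aestronglyMeasurable_const hq).trans
          (add_le_add ((eLpNorm_add_le h₁ h₂ hq).trans (add_le_add hblock hergN)) hmean)
    _ ≤ ENNReal.ofReal (2 * C * (b - a) + η) := by
        have hba : 0 ≤ C * (b - a) := mul_nonneg hC (sub_nonneg.2 hab.le)
        rw [← ENNReal.ofReal_add (by positivity) hba, ← ENNReal.ofReal_add (by positivity)
          (half_pos hη).le, ← ENNReal.ofReal_add (by positivity) hba]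
        exact ENNReal.ofReal_le_ofReal (by linarith)

end Mean

end IsLSA

/-- Theorem 3.2(a): global law of large numbers under continuous observations:
`(1/t)∫₀ᵗ Y_N(ν)dν → (1/t)∫₀ᵗ E[Ỹ_u(0)]du` in `L^p`. -/
theorem lln_continuous_observations_global
    {Ω : Type*} [MeasurableSpace Ω] (μ : Measure Ω) [IsProbabilityMeasure μ]
    (Y : ℕ → ℝ → Ω → ℝ) (Ytil : ℝ → ℝ → Ω → ℝ) (p : ℝ)
    (hLSA : IsLSA μ Y Ytil p) :
    ∀ t : ℝ, 0 < t →
      Tendsto (fun N : ℕ =>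
          eLpNorm (fun ω =>
              (1 / t) * (∫ ν in (0 : ℝ)..t, Y N ν ω) -
                (1 / t) * ∫ u in (0 : ℝ)..t, (∫ ω', Ytil u 0 ω' ∂μ))
            (ENNReal.ofReal p) μ)
        atTop (𝓝 0) := by
  intro t ht
  obtain ⟨C, hC, hLip, happrox⟩ := hLSA.approx
  have havg : ∀ f : ℝ → ℝ, (1 / t) * ∫ ν in 0..t, f ν = ⨍ ν in 0..t, f ν := fun f => by
    rw [interval_average_eq, sub_zero, smul_eq_mul, one_div]
  simp_rw [havg]
  refine ENNReal.tendsto_nhds_zero.2 fun ε hε => ?_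
  obtain ⟨r, -, hr₀, hrε⟩ := ENNReal.lt_iff_exists_real_btwn.1 hε
  have hr : 0 < r := by simpa using hr₀
  -- `K > 4 C t / r` makes the block error `2 C t / K` at most `r / 2`.
  obtain ⟨K, hK⟩ := exists_nat_gt (4 * C * t / r)
  have hK0 : (0 : ℝ) < K := lt_of_le_of_lt (by positivity) hK
  have hblocks : ∀ᶠ N : ℕ in atTop, ∀ i ∈ Finset.range K, eLpNorm (fun ω =>
      (⨍ ν in i * (t / K)..(i + 1 : ℕ) * (t / K), Y N ν ω) -
        ⨍ ν in i * (t / K)..(i + 1 : ℕ) * (t / K), ∫ ω', Ytil ν 0 ω' ∂μ) (ENNReal.ofReal p) μ ≤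
      ENNReal.ofReal r := by
    refine (Filter.eventually_all_finset _).2 fun i _ => ?_
    have hlen : ((i + 1 : ℕ) : ℝ) * (t / K) - i * (t / K) = t / K := by push_cast; ring
    filter_upwards [hLSA.eventually_eLpNorm_intervalAverage_sub_le hLip hC.le happrox
      (a := i * (t / K)) (b := (i + 1 : ℕ) * (t / K)) (by positivity)
      (by rw [← sub_pos, hlen]; positivity) (half_pos hr)] with N hN
    refine hN.trans (ENNReal.ofReal_le_ofReal ?_)
    rw [hlen, mul_div_assoc', div_add' _ _ _ hK0.ne', div_le_iff₀ hK0]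
    rw [div_lt_iff₀ hr] at hK
    nlinarith
  filter_upwards [hblocks, eventually_ge_atTop 1] with N hN hN1
  exact (eLpNorm_intervalAverage_sub_le_of_blocks (hLSA.measY N) ht
    (hLSA.ae_intervalIntegrable hN1 le_rfl ht.le)
    (hLSA.intervalIntegrable_mean hLip hC.le le_rfl ht.le) (by exact_mod_cast hK0)
    hLSA.one_le_ofReal hN).trans hrε.le
end

section
/- Let a: ℝ → ℝ be Lipschitz continuous with Lipschitz constant L and suppose ε := inf_{s∈ℝ} a(s) > 0. Then there exists a constant C > 0, depending only on L and ε, such that for all t ∈ ℝ and all N ∈ ℕ: ∫_0^∞ (e^{−∫_{−s}^0 a(τ/N + t) dτ} − e^{−a(t)s})² ds ≤ C/N². -/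
/-!
Since `a` is `L`-Lipschitz, `|∫_{-s}^0 a(τ/N + t) dτ - a(t) s| ≤ L s² / (2N)`, and both exponents
are at least `ε s`. On `[m, ∞)` the map `u ↦ e^{-u}` is `e^{-m}`-Lipschitz, so the integrand is
at most `(L / 2N)² s⁴ e^{-2εs}`, whose integral over `(0, ∞)` is `4! (L / 2N)² / (2ε)⁵`.
-/

open MeasureTheory Set Real
open scoped NNReal Nat

lemma integral_pow_mul_exp_neg_mul_Ioi (n : ℕ) {r : ℝ} (hr : 0 < r) :
    ∫ s in Ioi (0 : ℝ), s ^ n * exp (-(r * s)) = n ! / r ^ (n + 1) := by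
  have h := integral_rpow_mul_exp_neg_mul_Ioi (a := n + 1) (by positivity) hr
  rw [add_sub_cancel_right, Gamma_nat_eq_factorial, one_div, inv_rpow hr.le,
    ← Nat.cast_add_one, rpow_natCast] at h
  rw [div_eq_inv_mul, ← h]
  refine setIntegral_congr_fun measurableSet_Ioi fun s _ => ?_
  simp [rpow_natCast]

lemma abs_exp_neg_sub_exp_neg_le {m u v : ℝ} (hu : m ≤ u) (hv : m ≤ v) :
    |exp (-u) - exp (-v)| ≤ exp (-m) * |u - v| := by
  wlog huv : u ≤ v generalizing u v
  · rw [abs_sub_comm, abs_sub_comm u]; exact this hv hu (le_of_not_ge huv)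
  have hfactor : exp (-u) - exp (-v) = exp (-u) * (1 - exp (-(v - u))) := by
    rw [mul_sub, mul_one, ← exp_add]; ring_nf
  have hgap : 0 ≤ 1 - exp (-(v - u)) := sub_nonneg.2 (exp_le_one_iff.2 (by linarith))
  rw [hfactor, abs_of_nonneg (by positivity), abs_sub_comm, abs_of_nonneg (sub_nonneg.2 huv)]
  exact mul_le_mul (exp_le_exp.2 (neg_le_neg hu)) (by linarith [add_one_le_exp (-(v - u))])
    hgap (exp_pos _).le

lemma LipschitzWith.abs_integral_comp_div_add_sub_le {a : ℝ → ℝ} {K : ℝ≥0}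
    (ha : LipschitzWith K a) {N s : ℝ} (hN : 0 < N) (hs : 0 ≤ s) (t : ℝ) :
    |(∫ τ in (-s)..0, a (τ / N + t)) - a t * s| ≤ K * s ^ 2 / (2 * N) := by
  have hint : IntervalIntegrable (fun τ => a (τ / N + t)) volume (-s) 0 :=
    (ha.continuous.comp (by fun_prop)).intervalIntegrable _ _
  have hsub : (∫ τ in (-s)..0, a (τ / N + t)) - a t * s
      = ∫ τ in (-s)..0, (a (τ / N + t) - a t) := by
    simp [intervalIntegral.integral_sub hint intervalIntegrable_const, mul_comm]
  have hbound : ∀ τ ∈ Ioc (-s) 0, ‖a (τ / N + t) - a t‖ ≤ K / N * -τ := fun τ hτ => by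
    calc ‖a (τ / N + t) - a t‖ ≤ K * ‖τ / N + t - t‖ := ha.norm_sub_le _ _
      _ = K / N * -τ := by
        rw [add_sub_cancel_right, norm_div, Real.norm_of_nonpos hτ.2,
          Real.norm_of_nonneg hN.le]; ring
  calc |(∫ τ in (-s)..0, a (τ / N + t)) - a t * s|
      ≤ ∫ τ in (-s)..0, K / N * -τ := by
        rw [hsub, ← Real.norm_eq_abs]
        exact intervalIntegral.norm_integral_le_of_norm_le (by linarith)
          (Filter.Eventually.of_forall hbound)
          ((continuous_const.mul continuous_neg).intervalIntegrable _ _)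
    _ = K * s ^ 2 / (2 * N) := by
        rw [intervalIntegral.integral_const_mul, intervalIntegral.integral_neg (f := fun τ => τ),
          integral_id]
        field_simp
        ring

lemma sq_exp_neg_integral_sub_exp_neg_le {a : ℝ → ℝ} {K : ℝ≥0} (ha : LipschitzWith K a)
    {ε : ℝ} (hε : ∀ x, ε ≤ a x) {N s : ℝ} (hN : 0 < N) (hs : 0 ≤ s) (t : ℝ) :
    (exp (-(∫ τ in (-s)..0, a (τ / N + t))) - exp (-(a t * s))) ^ 2
      ≤ (K / (2 * N)) ^ 2 * (s ^ 4 * exp (-(2 * ε * s))) := by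
  set I := ∫ τ in (-s)..0, a (τ / N + t)
  have hI : ε * s ≤ I := by
    have h : ∫ _ in (-s)..0, ε ≤ I :=
      intervalIntegral.integral_mono_on (neg_nonpos.2 hs) intervalIntegrable_const
        ((ha.continuous.comp (by fun_prop)).intervalIntegrable _ _) fun τ _ => hε (τ / N + t)
    simpa [mul_comm] using h
  have hdiff : |exp (-I) - exp (-(a t * s))| ≤ exp (-(ε * s)) * (K * s ^ 2 / (2 * N)) :=
    (abs_exp_neg_sub_exp_neg_le hI (mul_le_mul_of_nonneg_right (hε t) hs)).trans
      (mul_le_mul_of_nonneg_left (ha.abs_integral_comp_div_add_sub_le hN hs t) (exp_pos _).le)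
  calc (exp (-I) - exp (-(a t * s))) ^ 2
      ≤ (exp (-(ε * s)) * (K * s ^ 2 / (2 * N))) ^ 2 :=
        sq_le_sq' (abs_le.1 hdiff).1 (abs_le.1 hdiff).2
    _ = (K / (2 * N)) ^ 2 * (s ^ 4 * exp (-(2 * ε * s))) := by
        rw [mul_pow, ← exp_nat_mul]; push_cast; ring_nf

theorem tv_ou_kernel_approximation_rate_general
    (a : ℝ → ℝ) (L : ℝ) (ha : LipschitzWith L.toNNReal a)
    (ε : ℝ) (hεdef : ε = ⨅ s : ℝ, a s) (hε : 0 < ε) :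
    ∃ C : ℝ, 0 < C ∧ ∀ (t : ℝ) (N : ℕ), 1 ≤ N →
      (∫ s in Set.Ioi (0 : ℝ),
          (Real.exp (-(∫ τ in (-s)..(0 : ℝ), a (τ / (N : ℝ) + t))) -
            Real.exp (-(a t * s))) ^ 2) ≤
        C / (N : ℝ) ^ 2 := by
  -- an infimum over a set unbounded below is the junk value `0`
  have hbdd : BddBelow (range a) :=
    by_contra fun h => hε.ne' (hεdef.trans (Real.iInf_of_not_bddBelow h))
  have hεle (x : ℝ) : ε ≤ a x := hεdef ▸ ciInf_le hbdd x
  set K : ℝ := (L.toNNReal : ℝ)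
  have hmoment := integral_pow_mul_exp_neg_mul_Ioi 4 (by positivity : 0 < 2 * ε)
  refine ⟨(K ^ 2 + 1) / ε ^ 5, by positivity, fun t N hN => ?_⟩
  have hN0 : (0 : ℝ) < N := by exact_mod_cast hN
  calc _ ≤ ∫ s in Ioi (0 : ℝ), (K / (2 * N)) ^ 2 * (s ^ 4 * exp (-(2 * ε * s))) := by
        refine integral_mono_of_nonneg (Filter.Eventually.of_forall fun s => sq_nonneg _)
          ((Integrable.of_integral_ne_zero ?_).const_mul _) ?_
        · rw [hmoment]; positivity
        · filter_upwards [self_mem_ae_restrict measurableSet_Ioi] with s hs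
          exact sq_exp_neg_integral_sub_exp_neg_le ha hεle hN0 hs.le t
    _ = 3 / 16 * K ^ 2 / ε ^ 5 / N ^ 2 := by
        rw [integral_const_mul, hmoment, show (4 ! : ℝ) = 24 by norm_num [Nat.factorial]]
        field_simp
        ring
    _ ≤ (K ^ 2 + 1) / ε ^ 5 / N ^ 2 := by
        gcongr
        nlinarith [sq_nonneg K]

/-- Kernel estimate from the proof of Proposition 5.2: if `a` is Lipschitz with
constant `L` and `ε := inf_s a(s) > 0`, then there is a constant `C > 0`
(depending only on `L` and `ε`) with
`∫₀^∞ (e^{-∫_{-s}^0 a(τ/N + t)dτ} - e^{-a(t)s})² ds ≤ C/N²` for all `t` and `N`. -/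
theorem tv_ou_kernel_approximation_rate
    (a : ℝ → ℝ) (L : ℝ) (hL : 0 ≤ L) (ha : LipschitzWith L.toNNReal a)
    (ε : ℝ) (hεdef : ε = ⨅ s : ℝ, a s) (hε : 0 < ε) :
    ∃ C : ℝ, 0 < C ∧ ∀ (t : ℝ) (N : ℕ), 1 ≤ N →
      (∫ s in Set.Ioi (0 : ℝ),
          (Real.exp (-(∫ τ in (-s)..(0 : ℝ), a (τ / (N : ℝ) + t))) -
            Real.exp (-(a t * s))) ^ 2) ≤
        C / (N : ℝ) ^ 2 :=
  tv_ou_kernel_approximation_rate_general a L ha ε hεdef hε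
end

section
/- Let p ∈ ℕ, let A: ℝ → M_p(ℝ) be a Lipschitz continuous matrix-valued function with Lipschitz constant L_A (with respect to the spectral norm), let t ∈ ℝ, N ∈ ℕ, s < 0, and suppose there exist γ, γ̃, λ, λ̃ > 0 such that ‖exp(ν·∫_s^0 A(τ/N + t) dτ)‖ ≤ γ·e^{νλs} and ‖exp(−ν·A(t)·s)‖ ≤ γ̃·e^{νλ̃s} for all ν ∈ [0,1]. Then, with λ̂ := min(λ, λ̃): ‖exp(∫_s^0 A(τ/N + t) dτ) − exp(−A(t)·s)‖ ≤ (L_A·γ·γ̃ / (2N)) · s² · e^{λ̂ s}. -/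
/-!
With `X = ∫_s^0 A(τ/N + t) dτ` and `Y = -s • A t`, differentiating `ν ↦ e^{νY} e^{(1-ν)X}` gives
`e^Y - e^X = ∫_0^1 e^{νY} (Y - X) e^{(1-ν)X} dν`. The hypotheses bound the outer factors by
`γ̃ γ e^{(ν λ̃ + (1-ν) λ) s} ≤ γ γ̃ e^{λ̂ s}` (as `s < 0`), while
`X - Y = ∫_s^0 (A(τ/N + t) - A(t)) dτ` has norm at most `∫_s^0 L_A |τ| / N dτ = L_A s² / (2N)`.
-/

open scoped Matrix.Norms.L2Operator NNReal

noncomputable section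

open NormedSpace Set

section ExpDifference

variable {𝔸 : Type*} [NormedRing 𝔸] [NormedAlgebra ℝ 𝔸] [CompleteSpace 𝔸]

theorem exp_sub_exp_eq_integral (X Y : 𝔸) :
    exp Y - exp X = ∫ ν in (0 : ℝ)..1, exp (ν • Y) * (Y - X) * exp ((1 - ν) • X) := by
  have hderiv : ∀ ν : ℝ, HasDerivAt (fun u : ℝ => exp (u • Y) * exp ((1 - u) • X))
      (exp (ν • Y) * (Y - X) * exp ((1 - ν) • X)) ν := by
    intro ν
    have hX : HasDerivAt (fun u : ℝ => exp ((1 - u) • X)) (-(X * exp ((1 - ν) • X))) ν := by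
      simpa [Function.comp_def] using
        (hasDerivAt_exp_smul_const' X (1 - ν)).scomp ν ((hasDerivAt_id ν).const_sub 1)
    refine ((hasDerivAt_exp_smul_const Y ν).mul hX).congr_deriv ?_
    rw [mul_neg, ← mul_assoc, ← sub_eq_add_neg, ← mul_sub_right_distrib, mul_sub]
  have hcont : Continuous fun ν : ℝ => exp (ν • Y) * (Y - X) * exp ((1 - ν) • X) := by
    have hexp : ∀ Z : 𝔸, Continuous fun ν : ℝ => exp (ν • Z) := fun Z =>
      continuous_iff_continuousAt.2 fun ν => (hasDerivAt_exp_smul_const Z ν).continuousAt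
    exact ((hexp Y).mul continuous_const).mul ((hexp X).comp (continuous_const.sub continuous_id))
  rw [intervalIntegral.integral_eq_sub_of_hasDerivAt (fun ν _ => hderiv ν)
    (hcont.intervalIntegrable _ _)]
  simp

theorem norm_exp_sub_exp_le {X Y : 𝔸} {C : ℝ}
    (h : ∀ ν ∈ Icc (0 : ℝ) 1, ‖exp (ν • Y)‖ * ‖exp ((1 - ν) • X)‖ ≤ C) :
    ‖exp X - exp Y‖ ≤ C * ‖X - Y‖ := by
  rw [norm_sub_rev, exp_sub_exp_eq_integral, norm_sub_rev]
  have hbound : ∀ ν ∈ uIoc (0 : ℝ) 1,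
      ‖exp (ν • Y) * (Y - X) * exp ((1 - ν) • X)‖ ≤ C * ‖Y - X‖ := by
    intro ν hν
    rw [uIoc_of_le zero_le_one] at hν
    calc _ ≤ ‖exp (ν • Y)‖ * ‖Y - X‖ * ‖exp ((1 - ν) • X)‖ := norm_mul₃_le
      _ = ‖exp (ν • Y)‖ * ‖exp ((1 - ν) • X)‖ * ‖Y - X‖ := by ring
      _ ≤ C * ‖Y - X‖ := by gcongr; exact h ν (Ioc_subset_Icc_self hν)
  simpa using intervalIntegral.norm_integral_le_of_norm_le_const hbound

end ExpDifference

theorem norm_integral_sub_smul_le_of_lipschitzWith {E : Type*} [NormedAddCommGroup E]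
    [NormedSpace ℝ E] [CompleteSpace E] {g : ℝ → E} {K : ℝ≥0} (hg : LipschitzWith K g) {a b : ℝ}
    (hab : a ≤ b) :
    ‖(∫ τ in a..b, g τ) - (b - a) • g b‖ ≤ K * (b - a) ^ 2 / 2 := by
  have hcont := hg.continuous
  rw [← intervalIntegral.integral_const, ← intervalIntegral.integral_sub
    (hcont.intervalIntegrable _ _) intervalIntegrable_const]
  calc _ ≤ ∫ τ in a..b, K * (b - τ) := by
        refine intervalIntegral.norm_integral_le_of_norm_le hab (.of_forall fun τ hτ => ?_)
          ((by fun_prop : Continuous fun τ : ℝ => K * (b - τ)).intervalIntegrable _ _)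
        rw [← dist_eq_norm]
        refine (hg.dist_le_mul τ b).trans_eq ?_
        rw [Real.dist_eq, abs_of_nonpos (by linarith [hτ.2]), neg_sub]
    _ = K * (b - a) ^ 2 / 2 := by
        rw [intervalIntegral.integral_const_mul, intervalIntegral.integral_sub
          intervalIntegrable_const intervalIntegral.intervalIntegrable_id, integral_id,
          intervalIntegral.integral_const, smul_eq_mul]
        ring

theorem lipschitzWith_div_natCast_add (N : ℕ) (t : ℝ) :
    LipschitzWith (N : ℝ≥0)⁻¹ fun τ : ℝ => τ / N + t :=
  .of_dist_le_mul fun x y => le_of_eq <| by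
    rw [Real.dist_eq, Real.dist_eq, add_sub_add_right_eq_sub, ← sub_div, abs_div, Nat.abs_cast,
      NNReal.coe_inv, NNReal.coe_natCast, inv_mul_eq_div]

theorem mul_le_mul_exp_min {a b γ γ' lam lam' s ν : ℝ} (hs : s ≤ 0) (hν : ν ∈ Icc (0 : ℝ) 1)
    (ha₀ : 0 ≤ a) (hb₀ : 0 ≤ b) (ha : a ≤ γ' * Real.exp (ν * lam' * s))
    (hb : b ≤ γ * Real.exp ((1 - ν) * lam * s)) :
    a * b ≤ γ * γ' * Real.exp (min lam lam' * s) := by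
  have hγ : 0 ≤ γ := nonneg_of_mul_nonneg_left (hb₀.trans hb) (Real.exp_pos _)
  have hexponent : ν * lam' * s + (1 - ν) * lam * s ≤ min lam lam' * s := by
    have h' := mul_nonneg hν.1 <|
      mul_nonneg_of_nonpos_of_nonpos (sub_nonpos.2 (min_le_right lam lam')) hs
    have h := mul_nonneg (sub_nonneg.2 hν.2) <|
      mul_nonneg_of_nonpos_of_nonpos (sub_nonpos.2 (min_le_left lam lam')) hs
    linarith
  calc a * b ≤ γ' * Real.exp (ν * lam' * s) * (γ * Real.exp ((1 - ν) * lam * s)) :=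
        mul_le_mul ha hb hb₀ (ha₀.trans ha)
    _ = γ * γ' * Real.exp (ν * lam' * s + (1 - ν) * lam * s) := by rw [Real.exp_add]; ring
    _ ≤ γ * γ' * Real.exp (min lam lam' * s) := by
        have hγ' : 0 ≤ γ' := nonneg_of_mul_nonneg_left (ha₀.trans ha) (Real.exp_pos _)
        gcongr

theorem matrix_exp_difference_bound_general
    (p : ℕ) (A : ℝ → Matrix (Fin p) (Fin p) ℝ)
    (LA : ℝ≥0) (hA : LipschitzWith LA A)
    (t : ℝ) (N : ℕ) (s : ℝ) (hs : s < 0)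
    (γ γ' lam lam' : ℝ)
    (h1 : ∀ ν : ℝ, ν ∈ Set.Icc (0 : ℝ) 1 →
      ‖NormedSpace.exp (ν • ∫ τ in s..(0 : ℝ), A (τ / (N : ℝ) + t))‖ ≤
        γ * Real.exp (ν * lam * s))
    (h2 : ∀ ν : ℝ, ν ∈ Set.Icc (0 : ℝ) 1 →
      ‖NormedSpace.exp ((-(ν * s)) • A t)‖ ≤ γ' * Real.exp (ν * lam' * s)) :
    ‖NormedSpace.exp (∫ τ in s..(0 : ℝ), A (τ / (N : ℝ) + t)) -
        NormedSpace.exp ((-s) • A t)‖ ≤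
      (LA : ℝ) * γ * γ' / (2 * (N : ℝ)) * s ^ 2 * Real.exp (min lam lam' * s) := by
  set X := ∫ τ in s..(0 : ℝ), A (τ / (N : ℝ) + t)
  have hXY : ‖X - (-s) • A t‖ ≤ LA * s ^ 2 / (2 * N) := by
    have := norm_integral_sub_smul_le_of_lipschitzWith
      (hA.comp (lipschitzWith_div_natCast_add N t)) hs.le
    simp only [Function.comp_apply, zero_div, zero_add, zero_sub, NNReal.coe_mul, NNReal.coe_inv,
      NNReal.coe_natCast, even_two, Even.neg_pow] at this
    exact this.trans_eq (by ring)
  have hprod : ∀ ν ∈ Icc (0 : ℝ) 1, ‖exp (ν • (-s) • A t)‖ * ‖exp ((1 - ν) • X)‖ ≤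
      γ * γ' * Real.exp (min lam lam' * s) := fun ν hν => by
    have hν' : 1 - ν ∈ Icc (0 : ℝ) 1 := ⟨by linarith [hν.2], by linarith [hν.1]⟩
    rw [smul_smul, mul_neg]
    exact mul_le_mul_exp_min hs.le hν (norm_nonneg _) (norm_nonneg _) (h2 ν hν) (h1 _ hν')
  calc _ ≤ γ * γ' * Real.exp (min lam lam' * s) * ‖X - (-s) • A t‖ := norm_exp_sub_exp_le hprod
    _ ≤ γ * γ' * Real.exp (min lam lam' * s) * (LA * s ^ 2 / (2 * N)) := by
        gcongr
        exact (mul_nonneg (norm_nonneg _) (norm_nonneg _)).trans (hprod 0 ⟨le_rfl, zero_le_one⟩)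
    _ = _ := by ring

/-- Matrix exponential estimate from the proof of Corollary 5.7: under uniform
exponential bounds on `exp(ν∫_s^0 A(τ/N + t)dτ)` and `exp(-νA(t)s)`, the
difference of the two matrix exponentials (in spectral norm) is bounded by
`(L_A γ γ̃ / (2N)) s² e^{λ̂ s}` with `λ̂ = min(λ, λ̃)`. -/
theorem matrix_exp_difference_bound
    (p : ℕ) (A : ℝ → Matrix (Fin p) (Fin p) ℝ)
    (LA : ℝ≥0) (hA : LipschitzWith LA A)
    (t : ℝ) (N : ℕ) (hN : 1 ≤ N) (s : ℝ) (hs : s < 0)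
    (γ γ' lam lam' : ℝ) (hγ : 0 < γ) (hγ' : 0 < γ')
    (hlam : 0 < lam) (hlam' : 0 < lam')
    (h1 : ∀ ν : ℝ, ν ∈ Set.Icc (0 : ℝ) 1 →
      ‖NormedSpace.exp (ν • ∫ τ in s..(0 : ℝ), A (τ / (N : ℝ) + t))‖ ≤
        γ * Real.exp (ν * lam * s))
    (h2 : ∀ ν : ℝ, ν ∈ Set.Icc (0 : ℝ) 1 →
      ‖NormedSpace.exp ((-(ν * s)) • A t)‖ ≤ γ' * Real.exp (ν * lam' * s)) :
    ‖NormedSpace.exp (∫ τ in s..(0 : ℝ), A (τ / (N : ℝ) + t)) -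
        NormedSpace.exp ((-s) • A t)‖ ≤
      (LA : ℝ) * γ * γ' / (2 * (N : ℝ)) * s ^ 2 * Real.exp (min lam lam' * s) :=
  matrix_exp_difference_bound_general p A LA hA t N s hs γ γ' lam lam' h1 h2
end
end
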